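/- arXiv:2407.00493 — 7 statements merged into one kernel-verified Lean document; each statement's English description precedes it below -/
import Mathlib

section
/- Let S be a positive definite integral lattice containing a vector h with h·h = 4, and suppose S contains no root (no vector e with e·e = 2). Then for any two vectors l₁, l₂ in S with l₁·l₁ = l₂·l₂ = 4 and l₁·h = l₂·h = 2, the product l₁·l₂ lies in {-2, 0, 1, 2, 4}; moreover l₁·l₂ = -2 if and only if l₁ + l₂ = h, and l₁·l₂ = 4 if and only if l₁ = l₂. -/
/-- In a positive definite root-free integral lattice with a
polarization `h` of square 4, any two "conics" `l₁ l₂` (square 4, product 2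
with `h`) satisfy `l₁·l₂ ∈ {-2,0,1,2,4}`, with `-2` iff `l₁ + l₂ = h` and
`4` iff `l₁ = l₂`. -/
theorem stmt0 (M : Type*) [AddCommGroup M] [Module ℤ M]
    [Module.Free ℤ M] [Module.Finite ℤ M]
    (B : LinearMap.BilinForm ℤ M)
    (hsymm : ∀ x y, B x y = B y x)
    (hpos : ∀ x : M, x ≠ 0 → 0 < B x x)
    (hroot : ∀ e : M, B e e ≠ 2)
    (h : M) (hh : B h h = 4)
    (l₁ l₂ : M) (h₁ : B l₁ l₁ = 4) (h₂ : B l₂ l₂ = 4)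
    (hl₁ : B l₁ h = 2) (hl₂ : B l₂ h = 2) :
    B l₁ l₂ ∈ ({-2, 0, 1, 2, 4} : Set ℤ) ∧
    (B l₁ l₂ = -2 ↔ l₁ + l₂ = h) ∧
    (B l₁ l₂ = 4 ↔ l₁ = l₂) := by
  set a := B l₁ l₂ with ha
  have hzero : ∀ x : M, B x x = 0 → x = 0 := by
    intro x hx
    by_contra hne
    exact absurd hx (ne_of_gt (hpos x hne))
  have hnn : ∀ x : M, 0 ≤ B x x := by
    intro x
    by_cases hx : x = 0
    · simp [hx]
    · exact (hpos x hx).le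
  have e1 : B (l₁ - l₂) (l₁ - l₂) = 8 - 2 * a := by
    simp only [map_sub, LinearMap.sub_apply]
    rw [hsymm l₂ l₁]
    linarith
  have e2 : B (h - l₁ - l₂) (h - l₁ - l₂) = 4 + 2 * a := by
    simp only [map_sub, LinearMap.sub_apply]
    rw [hsymm l₂ l₁, hsymm h l₁, hsymm h l₂]
    linarith
  have b1 : 0 ≤ 8 - 2 * a := e1 ▸ hnn _
  have b2 : 0 ≤ 4 + 2 * a := e2 ▸ hnn _
  have n1 : a ≠ 3 := by
    intro h3
    exact hroot (l₁ - l₂) (by rw [e1, h3]; ring)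
  have n2 : a ≠ -1 := by
    intro h3
    exact hroot (h - l₁ - l₂) (by rw [e2, h3]; ring)
  have hm2 : a = -2 ↔ l₁ + l₂ = h := by
    constructor
    · intro hA
      have : h - l₁ - l₂ = 0 := hzero _ (by rw [e2, hA]; ring)
      exact (sub_eq_zero.mp (by rwa [sub_sub] at this)).symm
    · intro hE
      have : B (l₁ + l₂) (l₁ + l₂) = B h h := by rw [hE]
      simp only [map_add, LinearMap.add_apply] at this
      rw [hsymm l₂ l₁] at this
      linarith
  have h4 : a = 4 ↔ l₁ = l₂ := by
    constructor
    · intro hA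
      have : l₁ - l₂ = 0 := hzero _ (by rw [e1, hA]; ring)
      exact sub_eq_zero.mp this
    · intro hE; rw [ha, hE, h₂]
  refine ⟨?_, hm2, h4⟩
  simp only [Set.mem_insert_iff, Set.mem_singleton_iff]
  omega
end

section
/- Let S be a lattice with a distinguished vector h of square 4 such that x·h is even for all x ∈ S (S is h-even). Define the modified form on S by x∗y = (1/2)(x·h)(y·h) − x·y. Then: (a) the modified pair (S, h) is again h-even with h∗h = 4, and applying the modification twice returns the original form; (b) if the original form restricted to the orthogonal complement h^⊥ is negative definite and h·h = 4 > 0 (S hyperbolic of signature (1, rank−1)), then the modified form is positive definite, and conversely. -/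
/-- the modified bilinear form `x∗y = (1/2)(x·h)(y·h) − x·y` on an
`h`-even lattice with `h² = 4` (encoded by `2·B'(x,y) = (x·h)(y·h) − 2·(x·y)`):
(a) the modified pair is again `h`-even with `h∗h = 4` and the modification is
involutive; (b) the original form is negative definite on `h^⊥` (hyperbolic of
signature `(1, rank−1)`, as `h·h = 4 > 0`) if and only if the modified form is
positive definite. -/
theorem stmt4 (M : Type*) [AddCommGroup M] [Module ℤ M]
    (B B' B'' : LinearMap.BilinForm ℤ M)
    (hBsymm : ∀ x y, B x y = B y x)
    (hB'symm : ∀ x y, B' x y = B' y x)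
    (h : M) (hh : B h h = 4)
    (heven : ∀ x : M, 2 ∣ B x h)
    (hmod : ∀ x y, 2 * B' x y = B x h * B y h - 2 * B x y) :
    (B' h h = 4 ∧ (∀ x : M, 2 ∣ B' x h)) ∧
    ((∀ x y, 2 * B'' x y = B' x h * B' y h - 2 * B' x y) → B'' = B) ∧
    ((∀ x : M, x ≠ 0 → B x h = 0 → B x x < 0) ↔ (∀ x : M, x ≠ 0 → 0 < B' x x)) := by
  have hB'h : ∀ x : M, B' x h = B x h := by
    intro x
    have := hmod x h
    rw [hh] at this
    linarith
  refine ⟨⟨?_, ?_⟩, ?_, ?_, ?_⟩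
  · have := hB'h h; rw [hh] at this; exact this
  · intro x; rw [hB'h x]; exact heven x
  · intro hmod'
    ext x y
    have h1 := hmod' x y
    have h2 := hmod x y
    rw [hB'h x, hB'h y] at h1
    omega
  · -- forward: neg def on h^⊥ → B' pos def
    intro hneg x hx
    set a : ℤ := B x h with ha
    set y : M := (4 : ℤ) • x - a • h with hy
    have hyh : B y h = 0 := by
      have e : B y h = (4 : ℤ) * B x h - a * B h h := by
        rw [hy]; simp
      rw [e, hh, ← ha]; ring
    have hyy : B y y = 16 * B x x - 4 * a ^ 2 := by
      have e : B y y = (4:ℤ) * ((4:ℤ) * B x x - a * B h x)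
          - a * ((4:ℤ) * B x h - a * B h h) := by
        rw [hy]; simp; ring
      rw [e, hh, ← ha, hBsymm h x, ← ha]; ring
    have hmxx := hmod x x
    rw [← ha] at hmxx
    by_cases hy0 : y = 0
    · have hByy : B y y = 0 := by rw [hy0]; simp
      rw [hyy] at hByy
      by_cases ha0 : a = 0
      · exfalso
        have hxx0 : B x x = 0 := by rw [ha0] at hByy; simpa using hByy
        have hxh0 : B x h = 0 := by rw [← ha]; exact ha0
        have := hneg x hx hxh0
        omega
      · have h2 : 0 < a ^ 2 := by positivity
        nlinarith
    · have hlt := hneg y hy0 hyh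
      rw [hyy] at hlt
      nlinarith [sq_nonneg a]
  · -- converse
    intro hpos x hx hxh
    have hm := hmod x x
    rw [hxh] at hm
    have h' := hpos x hx
    linarith
end

section
/- With A(m,n) the maximal size of an admissible collection of m-element subsets of an n-element set (admissibility: all pairwise symmetric differences have cardinality in {0,4,6,8,12}, and D_n ∩ span⁰ is root free), one has the recursions A(m,n) ≤ A(m−1,n−1) + A(m,n−1) and m·A(m,n) ≤ n·A(m−1,n−1) for 1 ≤ m ≤ n. -/
/-- Characteristic vector of a subset of `{1,…,n}` in `ℚⁿ`. -/
def charVecQ {n : ℕ} (s : Finset (Fin n)) : Fin n → ℚ := fun i => if i ∈ s then 1 else 0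

/-- `span⁰(F) = {Σ_s α_s v(s) : Σ α_s = 0}`. -/
def spanZero {n : ℕ} (F : Finset (Finset (Fin n))) : Set (Fin n → ℚ) :=
  {x | ∃ α : Finset (Fin n) → ℚ, (∑ s ∈ F, α s) = 0 ∧ x = ∑ s ∈ F, α s • charVecQ s}

/-- Membership in `D_n ⊆ ℤⁿ ⊆ ℚⁿ`: integral coordinates with even sum. -/
def inDn {n : ℕ} (x : Fin n → ℚ) : Prop :=
  (∀ i, ∃ k : ℤ, x i = k) ∧ ∃ k : ℤ, (∑ i, x i) = 2 * k

/-- `D_n ∩ span⁰(F)` is root free: it contains no vector of square `2`. -/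
def rootFreeColl {n : ℕ} (F : Finset (Finset (Fin n))) : Prop :=
  ∀ x ∈ spanZero F, inDn x → (∑ i, x i * x i) ≠ 2

/-- Admissibility of a collection of subsets. -/
def admissibleColl {n : ℕ} (F : Finset (Finset (Fin n))) : Prop :=
  (∀ r ∈ F, ∀ s ∈ F, (symmDiff r s).card ∈ ({0, 4, 6, 8, 12} : Set ℕ)) ∧ rootFreeColl F

/-- `A(m,n)`: the maximal cardinality of an admissible collection of `m`-element
subsets of an `n`-element set. -/
noncomputable def boundA (m n : ℕ) : ℕ :=
  sSup {k | ∃ F : Finset (Finset (Fin n)),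
    admissibleColl F ∧ (∀ s ∈ F, s.card = m) ∧ F.card = k}

-- auxiliary lemmas

lemma bddS (m n : ℕ) : BddAbove {k | ∃ F : Finset (Finset (Fin n)),
    admissibleColl F ∧ (∀ s ∈ F, s.card = m) ∧ F.card = k} := by
  refine ⟨Fintype.card (Finset (Fin n)), ?_⟩
  rintro k ⟨F, -, -, rfl⟩
  exact F.card_le_univ

lemma admissible_empty {n : ℕ} : admissibleColl (∅ : Finset (Finset (Fin n))) := by
  constructor
  · simp
  · rintro x ⟨α, -, rfl⟩ _
    simp

lemma le_boundA {m n : ℕ} {F : Finset (Finset (Fin n))} (h1 : admissibleColl F)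
    (h2 : ∀ s ∈ F, s.card = m) : F.card ≤ boundA m n :=
  le_csSup (bddS m n) ⟨F, h1, h2, rfl⟩

lemma boundA_attained (m n : ℕ) : ∃ F : Finset (Finset (Fin n)),
    admissibleColl F ∧ (∀ s ∈ F, s.card = m) ∧ F.card = boundA m n := by
  have hne : {k | ∃ F : Finset (Finset (Fin n)),
      admissibleColl F ∧ (∀ s ∈ F, s.card = m) ∧ F.card = k}.Nonempty :=
    ⟨0, ∅, admissible_empty, by simp, rfl⟩
  exact Nat.sSup_mem hne (bddS m n)

lemma admissible_subset {n : ℕ} {F F' : Finset (Finset (Fin n))} (hsub : F' ⊆ F)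
    (h : admissibleColl F) : admissibleColl F' := by
  constructor
  · intro r hr s hs; exact h.1 r (hsub hr) s (hsub hs)
  · rintro x ⟨α, h0, rfl⟩ hDn
    refine h.2 _ ⟨fun s => if s ∈ F' then α s else 0, ?_, ?_⟩ hDn
    · rw [Finset.sum_ite_mem, Finset.inter_eq_right.mpr hsub, h0]
    · rw [show (∑ s ∈ F, (if s ∈ F' then α s else 0) • charVecQ s)
          = ∑ s ∈ F, (if s ∈ F' then α s • charVecQ s else 0) by
        apply Finset.sum_congr rfl; intro s _; split <;> simp,
        Finset.sum_ite_mem, Finset.inter_eq_right.mpr hsub]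

section delete
variable {n : ℕ} (p : Fin (n + 1))

noncomputable def pdown (s : Finset (Fin (n + 1))) : Finset (Fin n) :=
  s.preimage p.succAbove (Fin.succAbove_right_injective.injOn)

lemma mem_pdown {s : Finset (Fin (n + 1))} {j : Fin n} :
    j ∈ pdown p s ↔ p.succAbove j ∈ s := Finset.mem_preimage

lemma image_pdown {s : Finset (Fin (n + 1))} (hp : p ∉ s) :
    (pdown p s).image p.succAbove = s := by
  ext x
  simp only [Finset.mem_image]
  constructor
  · rintro ⟨j, hj, rfl⟩; exact (mem_pdown p).mp hj
  · intro hx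
    obtain ⟨j, rfl⟩ := Fin.exists_succAbove_eq (show x ≠ p from fun h => hp (h ▸ hx))
    exact ⟨j, (mem_pdown p).mpr hx, rfl⟩

lemma card_pdown {s : Finset (Fin (n + 1))} (hp : p ∉ s) : (pdown p s).card = s.card := by
  have := Finset.card_image_of_injective (pdown p s) (Fin.succAbove_right_injective (p := p))
  rw [image_pdown p hp] at this
  exact this.symm

lemma pdown_symmDiff (s r : Finset (Fin (n + 1))) :
    pdown p (symmDiff s r) = symmDiff (pdown p s) (pdown p r) := by
  ext j
  simp [mem_pdown, Finset.mem_symmDiff]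

lemma card_le_out {m : ℕ} (F : Finset (Finset (Fin (n + 1))))
    (hadm : admissibleColl F) (hm : ∀ s ∈ F, s.card = m) (hp : ∀ s ∈ F, p ∉ s) :
    F.card ≤ boundA m n := by
  have hinj : ∀ a ∈ F, ∀ b ∈ F, pdown p a = pdown p b → a = b := by
    intro a ha b hb h
    rw [← image_pdown p (hp a ha), ← image_pdown p (hp b hb), h]
  have hcard : (F.image (pdown p)).card = F.card := Finset.card_image_of_injOn hinj
  rw [← hcard]
  apply le_boundA
  · constructor
    · rintro r hr s hs
      simp only [Finset.mem_image] at hr hs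
      obtain ⟨r', hr', rfl⟩ := hr
      obtain ⟨s', hs', rfl⟩ := hs
      rw [← pdown_symmDiff, card_pdown p (by
        intro hmem
        rcases Finset.mem_symmDiff.mp hmem with ⟨h1, _⟩ | ⟨h1, _⟩
        exacts [hp r' hr' h1, hp s' hs' h1])]
      exact hadm.1 r' hr' s' hs'
    · rintro x ⟨α, h0, rfl⟩ hDn hsq
      set x := ∑ t ∈ F.image (pdown p), α t • charVecQ t with hxdef
      set y : Fin (n + 1) → ℚ := ∑ s ∈ F, α (pdown p s) • charVecQ s with hydef
      have hyp : y p = 0 := by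
        rw [hydef, Finset.sum_apply]
        apply Finset.sum_eq_zero
        intro s hs
        simp [charVecQ, hp s hs]
      have hyj : ∀ j : Fin n, y (p.succAbove j) = x j := by
        intro j
        rw [hydef, hxdef, Finset.sum_apply, Finset.sum_apply, Finset.sum_image hinj]
        apply Finset.sum_congr rfl
        intro s hs
        simp only [Pi.smul_apply, smul_eq_mul, charVecQ, mem_pdown]
      have hymem : y ∈ spanZero F := by
        refine ⟨fun s => α (pdown p s), ?_, rfl⟩
        rw [← Finset.sum_image hinj, h0]
      have hyDn : inDn y := by
        constructor
        · intro i
          by_cases hip : i = p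
          · exact ⟨0, by simp [hip, hyp]⟩
          · obtain ⟨j, rfl⟩ := Fin.exists_succAbove_eq hip
            rw [hyj j]; exact hDn.1 j
        · obtain ⟨k, hk⟩ := hDn.2
          refine ⟨k, ?_⟩
          rw [Fin.sum_univ_succAbove y p, hyp, zero_add]
          rw [← hk]
          exact Finset.sum_congr rfl fun j _ => hyj j
      apply hadm.2 y hymem hyDn
      rw [Fin.sum_univ_succAbove (fun i => y i * y i) p, hyp, mul_zero, zero_add, ← hsq]
      exact Finset.sum_congr rfl fun j _ => by rw [hyj j]
  · rintro t ht
    simp only [Finset.mem_image] at ht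
    obtain ⟨s, hs, rfl⟩ := ht
    rw [card_pdown p (hp s hs)]
    exact hm s hs

lemma card_le_in {m : ℕ} (F : Finset (Finset (Fin (n + 1))))
    (hadm : admissibleColl F) (hm : ∀ s ∈ F, s.card = m) (hp : ∀ s ∈ F, p ∈ s) :
    F.card ≤ boundA (m - 1) n := by
  classical
  set E := F.image (fun s => s.erase p) with hEdef
  have hinj : ∀ a ∈ F, ∀ b ∈ F, a.erase p = b.erase p → a = b := by
    intro a ha b hb h
    rw [← Finset.insert_erase (hp a ha), ← Finset.insert_erase (hp b hb), h]
  have hcard : E.card = F.card := Finset.card_image_of_injOn hinj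
  have hEnp : ∀ t ∈ E, p ∉ t := by
    rintro t ht
    obtain ⟨s, hs, rfl⟩ := Finset.mem_image.mp ht
    exact Finset.notMem_erase p s
  have hEadm : admissibleColl E := by
    constructor
    · rintro r hr s hs
      obtain ⟨r', hr', rfl⟩ := Finset.mem_image.mp hr
      obtain ⟨s', hs', rfl⟩ := Finset.mem_image.mp hs
      have : symmDiff (r'.erase p) (s'.erase p) = symmDiff r' s' := by
        ext x
        by_cases hxp : x = p <;>
          simp [Finset.mem_symmDiff, Finset.mem_erase, hxp, hp r' hr', hp s' hs']
      rw [this]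
      exact hadm.1 r' hr' s' hs'
    · rintro x ⟨α, h0, rfl⟩ hDn
      refine hadm.2 _ ⟨fun s => α (s.erase p), ?_, ?_⟩ hDn
      · rw [← Finset.sum_image hinj, h0]
      · rw [Finset.sum_image hinj]
        funext i
        rw [Finset.sum_apply, Finset.sum_apply]
        by_cases hip : i = p
        · rw [hip]
          have hL : ∑ c ∈ F, (α (c.erase p) • charVecQ (c.erase p)) p = 0 :=
            Finset.sum_eq_zero fun s _ => by simp [charVecQ, Finset.notMem_erase]
          have hR : ∑ c ∈ F, ((fun s => α (s.erase p)) c • charVecQ c) p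
              = ∑ c ∈ F, α (c.erase p) :=
            Finset.sum_congr rfl fun s hs => by simp [charVecQ, hp s hs]
          rw [hL, hR, ← Finset.sum_image hinj, h0]
        · apply Finset.sum_congr rfl
          intro s _
          simp [Pi.smul_apply, smul_eq_mul, charVecQ, Finset.mem_erase, ne_eq, hip]
  have hEm : ∀ t ∈ E, t.card = m - 1 := by
    rintro t ht
    obtain ⟨s, hs, rfl⟩ := Finset.mem_image.mp ht
    rw [Finset.card_erase_of_mem (hp s hs), hm s hs]
  rw [← hcard]
  exact card_le_out p E hEadm hEm hEnp

end delete

/-- the recursions `A(m,n) ≤ A(m−1,n−1) + A(m,n−1)` and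
`m·A(m,n) ≤ n·A(m−1,n−1)` for `1 ≤ m ≤ n`. -/
theorem stmt8 (m n : ℕ) (hm : 1 ≤ m) (hmn : m ≤ n) :
    boundA m n ≤ boundA (m - 1) (n - 1) + boundA m (n - 1) ∧
    m * boundA m n ≤ n * boundA (m - 1) (n - 1) := by
  classical
  obtain ⟨n', rfl⟩ : ∃ n', n = n' + 1 := ⟨n - 1, by omega⟩
  have hn1 : n' + 1 - 1 = n' := rfl
  obtain ⟨F, hadm, hcards, hcard⟩ := boundA_attained m (n' + 1)
  constructor
  · set p := Fin.last n'
    have h1 : (F.filter (fun s => p ∈ s)).card ≤ boundA (m - 1) n' := by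
      apply card_le_in p _ (admissible_subset (Finset.filter_subset _ _) hadm)
      · intro s hs; exact hcards s (Finset.filter_subset _ _ hs)
      · intro s hs; exact (Finset.mem_filter.mp hs).2
    have h0 : (F.filter (fun s => p ∉ s)).card ≤ boundA m n' := by
      apply card_le_out p _ (admissible_subset (Finset.filter_subset _ _) hadm)
      · intro s hs; exact hcards s (Finset.filter_subset _ _ hs)
      · intro s hs; exact (Finset.mem_filter.mp hs).2
    have hsplit := Finset.card_filter_add_card_filter_not (s := F)
      (fun s => p ∈ s)
    rw [hn1, ← hcard]
    omega
  · have hdouble : ∑ i : Fin (n' + 1), (F.filter (fun s => i ∈ s)).card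
        = ∑ s ∈ F, s.card := by
      simp only [Finset.card_filter]
      rw [Finset.sum_comm]
      apply Finset.sum_congr rfl
      intro s _
      rw [Finset.sum_ite_mem, Finset.univ_inter, Finset.card_eq_sum_ones]
    have hsum : ∑ s ∈ F, s.card = m * F.card := by
      rw [Finset.sum_congr rfl hcards, Finset.sum_const, smul_eq_mul, mul_comm]
    have hi : ∀ i : Fin (n' + 1), (F.filter (fun s => i ∈ s)).card ≤ boundA (m - 1) n' := by
      intro i
      apply card_le_in i _ (admissible_subset (Finset.filter_subset _ _) hadm)
      · intro s hs; exact hcards s (Finset.filter_subset _ _ hs)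
      · intro s hs; exact (Finset.mem_filter.mp hs).2
    have : m * F.card ≤ (n' + 1) * boundA (m - 1) n' := by
      rw [← hsum, ← hdouble]
      calc ∑ i : Fin (n' + 1), (F.filter (fun s => i ∈ s)).card
          ≤ ∑ _i : Fin (n' + 1), boundA (m - 1) n' := Finset.sum_le_sum fun i _ => hi i
        _ = (n' + 1) * boundA (m - 1) n' := by
            rw [Finset.sum_const, Finset.card_univ, Fintype.card_fin, smul_eq_mul]
    rw [hn1, ← hcard]
    exact this
end

section
/- Any collection F of 3-element subsets of a 6-element set with the property that |r △ s| ∈ {4,6} for all distinct r,s ∈ F, and such that the even lattice D_6 ∩ span⁰(F) contains no vector of square 2, has at most 3 elements; and 3 is attained. -/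
/-!
Two distinct triples with `|r △ s| ∈ {4, 6}` meet in at most one point, and a disjoint pair
covers all six points, leaving no room for a third triple. So in a family of at least three
triples any two meet in exactly one point. For four such triples `a, b, c, d` double counting
gives `∑ₖ (deg k - 2)² = 0`, i.e. every point lies in exactly two of them; hence
`(v a + v b - v c - v d) / 2 = 1 - v c - v d` is an integral vector with coordinate sum `0`
and norm `6 - 3 - 3 + 2 |c ∩ d| = 2`, a root in `span⁰`. The triangle
`{0,1,2}, {0,3,4}, {1,3,5}` attains `3`.
-/

open Finset

section CharVec

variable {n : ℕ}

lemma charVecQ_mul (s t : Finset (Fin n)) (k : Fin n) :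
    charVecQ s k * charVecQ t k = charVecQ (s ∩ t) k := by
  by_cases hs : k ∈ s <;> by_cases ht : k ∈ t <;> simp [charVecQ, hs, ht]

lemma charVecQ_mul_self (s : Finset (Fin n)) (k : Fin n) :
    charVecQ s k * charVecQ s k = charVecQ s k := by
  rw [charVecQ_mul, inter_self]

lemma sum_charVecQ (s : Finset (Fin n)) : ∑ k, charVecQ s k = #s := by
  simp [charVecQ]

lemma exists_int_eq_charVecQ (s : Finset (Fin n)) (k : Fin n) : ∃ m : ℤ, charVecQ s k = m := by
  by_cases hs : k ∈ s
  · exact ⟨1, by simp [charVecQ, hs]⟩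
  · exact ⟨0, by simp [charVecQ, hs]⟩

lemma smul_add_sub_sub_mem_spanZero {F : Finset (Finset (Fin n))} {a b c d : Finset (Fin n)}
    (ha : a ∈ F) (hb : b ∈ F) (hc : c ∈ F) (hd : d ∈ F) (q : ℚ) :
    q • (charVecQ a + charVecQ b - charVecQ c - charVecQ d) ∈ spanZero F := by
  refine ⟨fun s => q * ((if a = s then 1 else 0) + (if b = s then 1 else 0)
    - (if c = s then 1 else 0) - (if d = s then 1 else 0)), ?_, ?_⟩
  · simp [← mul_sum, sum_add_distrib, sum_sub_distrib, ha, hb, hc, hd]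
  · simp [mul_smul, ← smul_sum, add_smul, sub_smul, sum_add_distrib, sum_sub_distrib, ha, hb, hc, hd]

end CharVec

lemma card_symmDiff_add_two_mul_card_inter {α : Type*} [DecidableEq α] (r s : Finset α) :
    #(symmDiff r s) + 2 * #(r ∩ s) = #r + #s := by
  rw [symmDiff_def, sup_eq_union, card_union_of_disjoint disjoint_sdiff_sdiff]
  have := card_sdiff_add_card_inter r s
  have := card_sdiff_add_card_inter s r
  rw [inter_comm s r] at this
  omega

lemma card_inter_eq_one_of_card_symmDiff {r s t : Finset (Fin 6)}
    (hr : #r = 3) (hs : #s = 3) (ht : #t = 3) (hrs : #(symmDiff r s) ∈ ({4, 6} : Set ℕ))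
    (hrt : #(symmDiff r t) ∈ ({4, 6} : Set ℕ)) (hst : #(symmDiff s t) ∈ ({4, 6} : Set ℕ)) :
    #(r ∩ s) = 1 := by
  have hrs' := card_symmDiff_add_two_mul_card_inter r s
  have hrt' := card_symmDiff_add_two_mul_card_inter r t
  have hst' := card_symmDiff_add_two_mul_card_inter s t
  simp only [Set.mem_insert_iff, Set.mem_singleton_iff] at hrs hrt hst
  suffices #(r ∩ s) ≠ 0 by omega
  intro h0
  have hcover : r ∪ s = univ := by
    apply eq_univ_of_card
    have := card_union_add_card_inter r s
    simp only [Fintype.card_fin]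
    omega
  have ht_le : #t ≤ #(r ∩ t) + #(s ∩ t) := by
    calc #t = #((r ∪ s) ∩ t) := by rw [hcover, univ_inter]
      _ = #((r ∩ t) ∪ (s ∩ t)) := by rw [union_inter_distrib_right]
      _ ≤ #(r ∩ t) + #(s ∩ t) := card_union_le _ _
  omega

lemma charVecQ_add_four_eq_two {a b c d : Finset (Fin 6)}
    (ha : #a = 3) (hb : #b = 3) (hc : #c = 3) (hd : #d = 3)
    (hab : #(a ∩ b) = 1) (hac : #(a ∩ c) = 1) (had : #(a ∩ d) = 1)
    (hbc : #(b ∩ c) = 1) (hbd : #(b ∩ d) = 1) (hcd : #(c ∩ d) = 1) (k : Fin 6) :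
    charVecQ a k + charVecQ b k + charVecQ c k + charVecQ d k = 2 := by
  set deg : Fin 6 → ℚ := fun k => charVecQ a k + charVecQ b k + charVecQ c k + charVecQ d k
  have hsq : ∀ k, (deg k - 2) ^ 2 = 4 - 3 * deg k + 2 * (charVecQ (a ∩ b) k
      + charVecQ (a ∩ c) k + charVecQ (a ∩ d) k + charVecQ (b ∩ c) k + charVecQ (b ∩ d) k
      + charVecQ (c ∩ d) k) := by
    intro k
    simp only [deg, ← charVecQ_mul]
    linear_combination charVecQ_mul_self a k + charVecQ_mul_self b k + charVecQ_mul_self c k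
      + charVecQ_mul_self d k
  -- double counting: `∑ deg = 4 * 3` and `∑ deg (deg - 1) = 2 * 6`, while there are six points
  have hsum : ∑ k, (deg k - 2) ^ 2 = 0 := by
    simp only [hsq, deg, sum_add_distrib, sum_sub_distrib, ← mul_sum, sum_charVecQ,
      ha, hb, hc, hd, hab, hac, had, hbc, hbd, hcd, sum_const, card_univ, Fintype.card_fin]
    norm_num
  have hk := (sum_eq_zero_iff_of_nonneg (fun k _ => sq_nonneg (deg k - 2))).mp hsum k (mem_univ k)
  exact sub_eq_zero.mp (pow_eq_zero_iff two_ne_zero |>.mp hk)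

lemma not_rootFreeColl_of_card_inter_eq_one {F : Finset (Finset (Fin 6))} {a b c d : Finset (Fin 6)}
    (ha : a ∈ F) (hb : b ∈ F) (hc : c ∈ F) (hd : d ∈ F)
    (ha3 : #a = 3) (hb3 : #b = 3) (hc3 : #c = 3) (hd3 : #d = 3)
    (hab : #(a ∩ b) = 1) (hac : #(a ∩ c) = 1) (had : #(a ∩ d) = 1)
    (hbc : #(b ∩ c) = 1) (hbd : #(b ∩ d) = 1) (hcd : #(c ∩ d) = 1) :
    ¬ rootFreeColl F := by
  intro hroot
  set x : Fin 6 → ℚ := fun k => 1 - charVecQ c k - charVecQ d k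
  have hx : x = (1 / 2 : ℚ) • (charVecQ a + charVecQ b - charVecQ c - charVecQ d) := by
    funext k
    have := charVecQ_add_four_eq_two ha3 hb3 hc3 hd3 hab hac had hbc hbd hcd k
    simp only [x, Pi.smul_apply, Pi.sub_apply, Pi.add_apply, smul_eq_mul]
    linarith
  refine hroot x (hx ▸ smul_add_sub_sub_mem_spanZero ha hb hc hd _) ⟨fun k => ?_, 0, ?_⟩ ?_
  · obtain ⟨m, hm⟩ := exists_int_eq_charVecQ c k
    obtain ⟨m', hm'⟩ := exists_int_eq_charVecQ d k
    exact ⟨1 - m - m', by simp [x, hm, hm']⟩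
  · norm_num [x, sum_sub_distrib, sum_charVecQ, hc3, hd3]
  · calc ∑ k, x k * x k = ∑ k, (1 - charVecQ c k - charVecQ d k + 2 * charVecQ (c ∩ d) k) := by
          refine sum_congr rfl fun k _ => ?_
          rw [← charVecQ_mul]
          linear_combination charVecQ_mul_self c k + charVecQ_mul_self d k
      _ = 2 := by
          norm_num [sum_add_distrib, sum_sub_distrib, ← mul_sum, sum_charVecQ, hc3, hd3, hcd]

theorem card_le_three_of_rootFreeColl {F : Finset (Finset (Fin 6))} (h3 : ∀ s ∈ F, #s = 3)
    (hsd : ∀ r ∈ F, ∀ s ∈ F, r ≠ s → #(symmDiff r s) ∈ ({4, 6} : Set ℕ))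
    (hroot : rootFreeColl F) : #F ≤ 3 := by
  by_contra! hF
  obtain ⟨a, ha⟩ : F.Nonempty := card_pos.mp (by omega)
  obtain ⟨b, c, d, hb, hc, hd, hbc, hbd, hcd⟩ :=
    two_lt_card_iff.mp (by rw [card_erase_of_mem ha]; omega : 2 < #(F.erase a))
  obtain ⟨hba, hb⟩ := mem_erase.mp hb
  obtain ⟨hca, hc⟩ := mem_erase.mp hc
  obtain ⟨hda, hd⟩ := mem_erase.mp hd
  have hinter {r s t : Finset (Fin 6)} (hr : r ∈ F) (hs : s ∈ F) (ht : t ∈ F)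
      (hrs : r ≠ s) (hrt : r ≠ t) (hst : s ≠ t) : #(r ∩ s) = 1 :=
    card_inter_eq_one_of_card_symmDiff (h3 r hr) (h3 s hs) (h3 t ht)
      (hsd r hr s hs hrs) (hsd r hr t ht hrt) (hsd s hs t ht hst)
  exact not_rootFreeColl_of_card_inter_eq_one ha hb hc hd (h3 a ha) (h3 b hb) (h3 c hc) (h3 d hd)
    (hinter ha hb hc hba.symm hca.symm hbc) (hinter ha hc hb hca.symm hba.symm hbc.symm)
    (hinter ha hd hb hda.symm hba.symm hbd.symm) (hinter hb hc ha hbc hba hca)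
    (hinter hb hd ha hbd hba hda) (hinter hc hd ha hcd hca hda) hroot

-- Writing `a, b, c` for the coefficients (so `c = -a - b`), the vector is
-- `(a + b, a + c, a, b + c, b, c)`, of norm `4 (a² + a b + b²)`; `a` and `b` are integral.
lemma rootFreeColl_triangle :
    rootFreeColl ({{0, 1, 2}, {0, 3, 4}, {1, 3, 5}} : Finset (Finset (Fin 6))) := by
  rintro x ⟨α, hα, rfl⟩ ⟨hint, -⟩ hnorm
  rw [sum_insert (by decide), sum_insert (by decide), sum_singleton] at hα hint hnorm
  obtain ⟨m, hm⟩ := hint 2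
  obtain ⟨m', hm'⟩ := hint 4
  simp only [Fin.isValue, Pi.add_apply, Pi.smul_apply, charVecQ, mem_insert, Fin.reduceEq,
    mem_singleton, or_true, ↓reduceIte, smul_eq_mul, mul_one, or_self, mul_zero, add_zero,
    zero_add, mul_ite, Fin.sum_univ_six, zero_ne_one, or_false, one_ne_zero] at hm hm' hnorm
  set a := α {0, 1, 2}
  set b := α {0, 3, 4}
  set c := α {1, 3, 5}
  have hQ : (4 * (m ^ 2 + m * m' + m' ^ 2) : ℚ) = 2 := by
    rw [← hm, ← hm']
    linear_combination hnorm - (3 * c - a - b) * hα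
  have hZ : 4 * (m ^ 2 + m * m' + m' ^ 2) = 2 := by exact_mod_cast hQ
  omega

/-- `A(3,6) = 3`: any collection of 3-element subsets of a 6-element
set with pairwise symmetric differences of cardinality in `{4,6}` and root-free
`D_6 ∩ span⁰` has at most 3 elements, and 3 is attained. -/
theorem stmt9 :
    (∀ F : Finset (Finset (Fin 6)),
      (∀ s ∈ F, s.card = 3) →
      (∀ r ∈ F, ∀ s ∈ F, r ≠ s → (symmDiff r s).card ∈ ({4, 6} : Set ℕ)) →
      rootFreeColl F → F.card ≤ 3) ∧
    (∃ F : Finset (Finset (Fin 6)),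
      (∀ s ∈ F, s.card = 3) ∧
      (∀ r ∈ F, ∀ s ∈ F, r ≠ s → (symmDiff r s).card ∈ ({4, 6} : Set ℕ)) ∧
      rootFreeColl F ∧ F.card = 3) :=
  ⟨fun _ h3 hsd hroot => card_le_three_of_rootFreeColl h3 hsd hroot,
    ⟨_, by decide, by decide, rootFreeColl_triangle, by decide⟩⟩
end

section
/- Let N be a positive definite even lattice, h ∈ N with h² = 4, and let C be a finite set of vectors l ∈ N with l² = 4 and l·h = 2 such that the sublattice ℚ-spanned by C ∪ {h} intersected with N contains no roots. Suppose u₁,…,u_m ∈ N are roots (square 2) with u_i·u_j ∈ {0,−1} for i ≠ j forming an affine Dynkin diagram, i.e., there exist rationals α_i > 0 with Σ α_i u_i = 0, and suppose there is a vector v such that u_i + v ∈ C for all i. Then we reach a contradiction: v lies in the ℚ-span of C, and v is a root; hence no such affine configuration can occur, so any set of roots {l − v : l ∈ C} arising this way is linearly independent. -/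
/-- core of Lemma `lem.max.roots`. In an even positive-definite
setting, if roots `u₁,…,u_m` forming an affine Dynkin diagram (a positive rational
dependence `Σ α_i u_i = 0`) all have `u_i + v` in a set `C` of square-4 vectors of
degree 2 whose rational span together with `h` is root free in `N`, then we reach a
contradiction. -/
theorem stmt12 (V : Type*) [AddCommGroup V] [Module ℚ V]
    (B : LinearMap.BilinForm ℚ V) (hsymm : ∀ x y, B x y = B y x)
    (hposdef : ∀ x : V, x ≠ 0 → 0 < B x x)
    (N : Submodule ℤ V)
    (heven : ∀ x ∈ N, ∃ k : ℤ, B x x = 2 * k)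
    (h : V) (hhN : h ∈ N) (hh : B h h = 4)
    (C : Finset V) (hCN : ∀ l ∈ C, l ∈ N)
    (hCsq : ∀ l ∈ C, B l l = 4 ∧ B l h = 2)
    (hrootfree : ∀ x : V, x ∈ N →
      x ∈ Submodule.span ℚ ((C : Set V) ∪ {h}) → B x x ≠ 2)
    (m : ℕ) (hm : 0 < m) (u : Fin m → V) (huN : ∀ i, u i ∈ N)
    (hroots : ∀ i, B (u i) (u i) = 2)
    (hprod : ∀ i j, i ≠ j → B (u i) (u j) = 0 ∨ B (u i) (u j) = -1)
    (α : Fin m → ℚ) (hα : ∀ i, 0 < α i) (hrel : ∑ i, α i • u i = 0)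
    (v : V) (hv : ∀ i, u i + v ∈ C) (hperp : ∀ i, B (u i) v = 0) :
    False := by
  have i0 : Fin m := ⟨0, hm⟩
  have hne : (Finset.univ : Finset (Fin m)).Nonempty := ⟨i0, Finset.mem_univ i0⟩
  have hαs : (0:ℚ) < ∑ i, α i := Finset.sum_pos (fun i _ => hα i) hne
  have hvN : v ∈ N := by
    have h1 : u i0 + v ∈ N := hCN _ (hv i0)
    have : (u i0 + v) - u i0 ∈ N := Submodule.sub_mem N h1 (huN i0)
    simpa using this
  have hspan : v ∈ Submodule.span ℚ ((C : Set V) ∪ {h}) := by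
    have hsum : (∑ i, α i) • v = ∑ i, α i • (u i + v) := by
      simp [smul_add, Finset.sum_add_distrib, hrel, Finset.sum_smul]
    have hveq : v = (∑ i, α i)⁻¹ • ∑ i, α i • (u i + v) := by
      rw [← hsum, smul_smul, inv_mul_cancel₀ hαs.ne', one_smul]
    rw [hveq]
    exact Submodule.smul_mem _ _ (Submodule.sum_mem _ fun i _ =>
      Submodule.smul_mem _ _ (Submodule.subset_span (Or.inl (hv i))))
  have h1 := (hCsq _ (hv i0)).1
  have h2 := hroots i0
  have h3 := hperp i0
  have h4 := hsymm v (u i0)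
  have hvv : B v v = 2 := by
    simp only [map_add, LinearMap.add_apply] at h1
    linarith
  exact hrootfree v hvN hspan hvv
end

section
/- Let N be a lattice, h ∈ N, and let Orb_h = {l ∈ N : l² = 4, l·h = 2} be finite. For any subset C ⊆ Orb_h whose saturation equals C (i.e., C = Orb_h ∩ (N ∩ (ℚC + ℚh))), there exists a finite chain C = C_n ⊆ C_{n−1} ⊆ … ⊆ C_1 ⊆ C_0 = Orb_h such that for each k, C_k = Orb_h ∩ S_k for some subgroup S_k of index 2 in ℤC_{k−1} + ℤh with h ∈ S_k. -/
open Submodule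

section aux

private lemma zmod2_eq (a b : ZMod 2) (ha : a ≠ 0) (hb : b ≠ 0) : a = b := by
  revert a b; decide

variable {M : Type*} [AddCommGroup M]

/-- Key step: find an index-2 subgroup cutting strictly below `D` but above `C`. -/
lemma stmt15_step (Orb C D : Finset M) (h : M)
    (hCD : C ⊆ D) (hDO : D ⊆ Orb) (hne : ¬ D ⊆ C)
    (hsat : ∀ l ∈ Orb,
      (∃ k : ℤ, k ≠ 0 ∧ k • l ∈ Submodule.span ℤ ((C : Set M) ∪ {h})) → l ∈ C) :
    ∃ S : AddSubgroup M, h ∈ S ∧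
      S ≤ AddSubgroup.closure ((D : Set M) ∪ {h}) ∧
      (S.addSubgroupOf (AddSubgroup.closure ((D : Set M) ∪ {h}))).index = 2 ∧
      (∀ c ∈ C, c ∈ S) ∧ ∃ d ∈ D, d ∉ S := by
  classical
  set G' : Submodule ℤ M := span ℤ ((D : Set M) ∪ {h}) with hG'
  set H : Submodule ℤ M := span ℤ ((C : Set M) ∪ {h}) with hH
  have hHG : H ≤ G' := span_mono (Set.union_subset_union_left _ (by exact_mod_cast hCD))
  set H₀ : Submodule ℤ G' := H.comap G'.subtype with hH₀
  set I : Ideal ℤ := Ideal.span {2} with hI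
  set π : G' →ₗ[ℤ] (G' ⧸ H₀) := H₀.mkQ with hπ
  have hDG : ∀ x ∈ D, x ∈ G' := fun x hx =>
    subset_span (Set.mem_union_left _ (by exact_mod_cast hx))
  have hhG : h ∈ G' := subset_span (Set.mem_union_right _ rfl)
  have hHmem : ∀ x (hx : x ∈ G'), x ∈ H → π ⟨x, hx⟩ = 0 := by
    intro x hx hxH
    rw [hπ, Submodule.mkQ_apply, Submodule.Quotient.mk_eq_zero]
    exact hxH
  haveI : Module.Finite ℤ G' :=
    Module.Finite.span_of_finite ℤ (D.finite_toSet.union (Set.finite_singleton h))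
  -- find d ∈ D \ C whose class in (G'/H₀) is not in I•⊤
  obtain ⟨d, hdG, hdD, hdC, hd⟩ :
      ∃ d, ∃ (hdG : d ∈ G'), d ∈ D ∧ d ∉ C ∧
        π ⟨d, hdG⟩ ∉ I • (⊤ : Submodule ℤ (G' ⧸ H₀)) := by
    by_contra hcon
    push_neg at hcon
    have hle : (⊤ : Submodule ℤ (G' ⧸ H₀)) ≤ I • ⊤ := by
      intro x _
      obtain ⟨y, rfl⟩ := H₀.mkQ_surjective x
      have key : ∀ v (hv : v ∈ G'), π ⟨v, hv⟩ ∈ I • (⊤ : Submodule ℤ (G' ⧸ H₀)) := by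
        intro v hv
        induction hv using span_induction with
        | mem v hvmem =>
          rcases hvmem with hvD | hvh
          · by_cases hvC : (v : M) ∈ C
            · have hvH : v ∈ H := subset_span (Set.mem_union_left _ (by exact_mod_cast hvC))
              rw [hHmem v _ hvH]; exact zero_mem _
            · exact hcon v _ (by exact_mod_cast hvD) hvC
          · have hvH : v ∈ H := subset_span (Set.mem_union_right _ hvh)
            rw [hHmem v _ hvH]; exact zero_mem _
        | zero =>
          have heq : (⟨0, zero_mem G'⟩ : G') = 0 := rfl
          rw [heq, map_zero]; exact zero_mem _
        | add a b ha hb iha ihb =>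
          have heq : (⟨a + b, add_mem ha hb⟩ : G') = ⟨a, ha⟩ + ⟨b, hb⟩ := rfl
          rw [heq, map_add]; exact add_mem iha ihb
        | smul r a ha iha =>
          have heq : (⟨r • a, Submodule.smul_mem G' r ha⟩ : G') = r • ⟨a, ha⟩ := rfl
          rw [heq, map_smul]; exact Submodule.smul_mem _ _ iha
      have := key (y : M) y.2
      convert this using 2
    obtain ⟨r, hr1, hr0⟩ :=
      Submodule.exists_sub_one_mem_and_smul_eq_zero_of_fg_of_le_smul I ⊤
        (Module.finite_def.mp inferInstance) hle
    obtain ⟨m, hm⟩ := Ideal.mem_span_singleton'.mp hr1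
    obtain ⟨d, hdD, hdC⟩ := Finset.not_subset.mp hne
    have hrd : r • d ∈ H := by
      have := hr0 (π ⟨d, hDG d hdD⟩) trivial
      rw [← map_smul, hπ, Submodule.mkQ_apply, Submodule.Quotient.mk_eq_zero] at this
      exact this
    have hrne : r ≠ 0 := by
      intro h0; rw [h0] at hm; omega
    exact hdC (hsat d (hDO hdD) ⟨r, hrne, hrd⟩)
  -- the quotient (G'/H₀) / (I•⊤) is a ZMod 2 vector space
  set J : Submodule ℤ (G' ⧸ H₀) := I • ⊤ with hJ
  haveI : Module (ZMod 2) ((G' ⧸ H₀) ⧸ J) := by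
    refine AddCommGroup.zmodModule (n := 2) ?_
    intro x
    obtain ⟨y, rfl⟩ := J.mkQ_surjective x
    rw [← map_nsmul, Submodule.mkQ_apply, Submodule.Quotient.mk_eq_zero]
    rw [two_nsmul, ← two_zsmul]
    exact Submodule.smul_mem_smul (Ideal.mem_span_singleton_self 2) trivial
  haveI : Fact (Nat.Prime 2) := ⟨Nat.prime_two⟩
  set b₂ : (G' ⧸ H₀) ⧸ J := J.mkQ (π ⟨d, hdG⟩) with hb₂def
  have hb₂ : b₂ ≠ 0 := by
    intro h0
    rw [hb₂def, hJ] at h0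
    exact hd (by rwa [Submodule.mkQ_apply, Submodule.Quotient.mk_eq_zero] at h0)
  set bs := Module.Free.chooseBasis (ZMod 2) ((G' ⧸ H₀) ⧸ J) with hbs
  have hrepr : bs.repr b₂ ≠ 0 := fun hh => hb₂ (by
    have := bs.repr.injective (a₁ := b₂) (a₂ := 0) (by rw [hh, map_zero])
    exact this)
  obtain ⟨i, hi⟩ := Finsupp.ne_iff.mp hrepr
  rw [Finsupp.coe_zero, Pi.zero_apply] at hi
  set φ : ((G' ⧸ H₀) ⧸ J) →ₗ[ZMod 2] ZMod 2 := bs.coord i with hφ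
  have hφb₂ : φ b₂ ≠ 0 := hi
  -- the add subgroup closure equals G' as sets
  set Ggrp : AddSubgroup M := AddSubgroup.closure ((D : Set M) ∪ {h}) with hGgrp
  have hGeq : ∀ x : M, x ∈ Ggrp ↔ x ∈ G' := by
    intro x
    rw [hGgrp, ← Submodule.span_int_eq_addSubgroupClosure]
    rfl
  -- the homomorphism Ggrp →+ ZMod 2
  set ι : Ggrp →+ G' := AddMonoidHom.mk'
    (fun x => (⟨(x : M), (hGeq x).mp x.2⟩ : G')) (fun a b => rfl) with hι
  set g : Ggrp →+ ZMod 2 :=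
    φ.toAddMonoidHom.comp (((J.mkQ.comp π).toAddMonoidHom).comp ι) with hg
  have hgzero : ∀ (x : Ggrp), (x : M) ∈ H → g x = 0 := by
    intro x hx
    show φ (J.mkQ (π ⟨(x : M), _⟩)) = 0
    rw [hHmem _ _ hx, map_zero, map_zero]
  have hdGgrp : d ∈ Ggrp := (hGeq d).mpr hdG
  have hgd : g ⟨d, hdGgrp⟩ ≠ 0 := by
    show φ (J.mkQ (π ⟨d, _⟩)) ≠ 0
    exact hφb₂
  have hgsurj : Function.Surjective g := by
    intro y
    by_cases hy : y = 0
    · exact ⟨0, by rw [map_zero, hy]⟩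
    · exact ⟨⟨d, hdGgrp⟩, zmod2_eq _ _ hgd hy⟩
  refine ⟨AddSubgroup.map Ggrp.subtype g.ker, ?_, ?_, ?_, ?_, ?_⟩
  · -- h ∈ S
    have hh : h ∈ Ggrp := AddSubgroup.subset_closure (Set.mem_union_right _ rfl)
    exact ⟨⟨h, hh⟩, hgzero _ (subset_span (Set.mem_union_right _ rfl)), rfl⟩
  · -- S ≤ Ggrp
    exact AddSubgroup.map_subtype_le _
  · -- index 2
    rw [AddSubgroup.addSubgroupOf,
      AddSubgroup.comap_map_eq_self_of_injective Ggrp.subtype_injective,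
      AddSubgroup.index_ker]
    rw [AddMonoidHom.range_eq_top_of_surjective g hgsurj]
    rw [Nat.card_congr AddSubgroup.topEquiv.toEquiv, Nat.card_zmod]
  · -- C ⊆ S
    intro c hc
    have hcG : c ∈ Ggrp := AddSubgroup.subset_closure
      (Set.mem_union_left _ (by exact_mod_cast hCD hc))
    exact ⟨⟨c, hcG⟩,
      hgzero _ (subset_span (Set.mem_union_left _ (by exact_mod_cast hc))), rfl⟩
  · -- d ∈ D, d ∉ S
    refine ⟨d, hdD, ?_⟩
    rintro ⟨⟨x, hxG⟩, hxker, hxd⟩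
    simp only [AddSubgroup.coe_subtype] at hxd
    subst hxd
    exact hgd hxker

end aux

lemma stmt15_chain {M : Type*} [AddCommGroup M] (Orb C : Finset M) (h : M)
    (hsat : ∀ l ∈ Orb,
      (∃ k : ℤ, k ≠ 0 ∧ k • l ∈ Submodule.span ℤ ((C : Set M) ∪ {h})) → l ∈ C) :
    ∀ (m : ℕ) (D : Finset M), D.card ≤ m → C ⊆ D → D ⊆ Orb →
      (∀ x ∈ Orb, x ∈ AddSubgroup.closure ((D : Set M) ∪ {h}) → x ∈ D) →
      ∃ (n : ℕ) (Ch : ℕ → Finset M), Ch 0 = D ∧ Ch n = C ∧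
        (∀ k < n, Ch (k + 1) ⊆ Ch k) ∧
        ∀ k < n, ∃ S : AddSubgroup M, h ∈ S ∧
          S ≤ AddSubgroup.closure ((Ch k : Set M) ∪ {h}) ∧
          (S.addSubgroupOf (AddSubgroup.closure ((Ch k : Set M) ∪ {h}))).index = 2 ∧
          (Ch (k + 1) : Set M) = {l : M | l ∈ Orb ∧ l ∈ S} := by
  classical
  intro m
  induction m with
  | zero =>
    intro D hcard hCD _ _
    have hD : D = C := by
      have : D = ∅ := Finset.card_eq_zero.mp (Nat.le_zero.mp hcard)
      exact Finset.Subset.antisymm (by simp [this]) hCD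
    exact ⟨0, fun _ => D, rfl, hD, fun k hk => absurd hk (by omega),
      fun k hk => absurd hk (by omega)⟩
  | succ m ih =>
    intro D hcard hCD hDO hclosed
    by_cases hDC : D ⊆ C
    · have hD : D = C := Finset.Subset.antisymm hDC hCD
      exact ⟨0, fun _ => D, rfl, hD, fun k hk => absurd hk (by omega),
        fun k hk => absurd hk (by omega)⟩
    · obtain ⟨S, hhS, hSle, hindex, hCS, d, hdD, hdS⟩ :=
        stmt15_step Orb C D h hCD hDO hDC hsat
      set D' : Finset M := Orb.filter (fun x => x ∈ S) with hD'def
      have hD'D : D' ⊆ D := by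
        intro x hx
        rw [hD'def, Finset.mem_filter] at hx
        exact hclosed x hx.1 (hSle hx.2)
      have hCD' : C ⊆ D' := fun c hc =>
        Finset.mem_filter.mpr ⟨hDO (hCD hc), hCS c hc⟩
      have hD'O : D' ⊆ Orb := Finset.filter_subset _ _
      have hd' : d ∉ D' := fun hx => hdS (Finset.mem_filter.mp hx).2
      have hssub : D' ⊂ D := ⟨hD'D, fun hsup => hd' (hsup hdD)⟩
      have hcard' : D'.card ≤ m := by
        have := Finset.card_lt_card hssub; omega
      have hclosed' : ∀ x ∈ Orb,
          x ∈ AddSubgroup.closure ((D' : Set M) ∪ {h}) → x ∈ D' := by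
        intro x hxO hxcl
        have hsub : ((D' : Set M) ∪ {h} : Set M) ⊆ S := by
          intro y hy
          rcases hy with hy | hy
          · exact (Finset.mem_filter.mp (by exact_mod_cast hy)).2
          · rw [Set.mem_singleton_iff] at hy; rw [hy]; exact hhS
        exact Finset.mem_filter.mpr ⟨hxO, (AddSubgroup.closure_le S).mpr hsub hxcl⟩
      obtain ⟨n', Ch', hCh0, hChn, hChsub, hChS⟩ := ih D' hcard' hCD' hD'O hclosed'
      refine ⟨n' + 1, fun k => match k with | 0 => D | Nat.succ k => Ch' k,
        rfl, hChn, ?_, ?_⟩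
      · intro k hk
        match k with
        | 0 => show Ch' 0 ⊆ D; rw [hCh0]; exact hD'D
        | Nat.succ k => exact hChsub k (by omega)
      · intro k hk
        match k with
        | 0 =>
          refine ⟨S, hhS, hSle, hindex, ?_⟩
          show ((Ch' 0 : Finset M) : Set M) = _
          rw [hCh0]
          ext x
          simp [hD'def, Finset.mem_filter]
        | Nat.succ k => exact hChS k (by omega)




/-- iterated index-2 subgroup lemma (Lemma `lem.subgroups`). For any
saturated subset `C` of the finite set `Orb_h = {l : l² = 4, l·h = 2}`, there is a
chain `C = C_n ⊆ … ⊆ C_0 = Orb_h` with each `C_k = Orb_h ∩ S_k` for some index-2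
subgroup `S_k ∋ h` of `ℤC_{k−1} + ℤh`. -/
theorem stmt15 (M : Type*) [AddCommGroup M] [Module ℤ M]
    (B : LinearMap.BilinForm ℤ M) (h : M)
    (Orb : Finset M)
    (hOrb : (Orb : Set M) = {l : M | B l l = 4 ∧ B l h = 2})
    (C : Finset M)
    (hsat : (C : Set M) = {l : M | l ∈ Orb ∧
      ∃ k : ℤ, k ≠ 0 ∧ k • l ∈ Submodule.span ℤ ((C : Set M) ∪ {h})}) :
    ∃ (n : ℕ) (Ch : ℕ → Finset M), Ch 0 = Orb ∧ Ch n = C ∧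
      (∀ k < n, Ch (k + 1) ⊆ Ch k) ∧
      ∀ k < n, ∃ S : AddSubgroup M, h ∈ S ∧
        S ≤ AddSubgroup.closure ((Ch k : Set M) ∪ {h}) ∧
        (S.addSubgroupOf (AddSubgroup.closure ((Ch k : Set M) ∪ {h}))).index = 2 ∧
        (Ch (k + 1) : Set M) = {l : M | l ∈ Orb ∧ l ∈ S} := by
  classical
  rename_i instM
  haveI : Subsingleton (Module ℤ M) := ⟨fun a b => by
    haveI := AddCommGroup.uniqueIntModule (M := M)
    exact Subsingleton.elim a b⟩
  obtain rfl : instM = AddCommGroup.toIntModule M := Subsingleton.elim _ _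
  have hsat' : ∀ l ∈ Orb,
      (∃ k : ℤ, k ≠ 0 ∧ k • l ∈ Submodule.span ℤ ((C : Set M) ∪ {h})) → l ∈ C := by
    intro l hl hk
    have : l ∈ (C : Set M) := (Set.ext_iff.mp hsat l).mpr ⟨hl, hk⟩
    exact_mod_cast this
  have hCO : C ⊆ Orb := by
    intro c hc
    have : c ∈ (C : Set M) := by exact_mod_cast hc
    exact ((Set.ext_iff.mp hsat c).mp this).1
  exact stmt15_chain Orb C h hsat' Orb.card Orb le_rfl hCO (fun _ h => h)
    (fun x hx _ => hx)
end

section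
/- In ℤ⁴ with standard inner product, let h = e₁ + e₂ and consider vectors l of the form ±e₁ ± e₃ or ±e₂ ± e₄ with l·h = 1. If C = {e₁ + e₃, e₁ − e₃, e₂ + e₄, e₂ − e₄} (a 4-element set of such vectors), then (1/2)(l₁ + l₂ − l₃ − l₄) = e₁ − e₂ is an integer vector of square 2 lying in the span of the differences of elements of C; hence any subset C of {l : l² = 2, l·h = 1, l ∈ ℤ⁴ appropriate} whose difference span avoids square-2 integer vectors has at most 3 elements. -/
/-!
The integral vectors `l ∈ ℤ⁴` with `l·l = 2` and `l·h = 1` are `e_a ± e_b` with `a ∈ {1, 2}` and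
`b ∈ {3, 4}`. If two distinct ones with the same `a` do not differ by a root, their tails `±e_b`
are unit vectors at squared distance `≠ 2`, hence opposite, so `l + l' = 2 e_a`. A root-free set
therefore has at most two elements with each `a`; if it had four, the two pairs would give
`(l₁ + l₂ - l₃ - l₄) / 2 = e₁ - e₂`, a root in the span of the differences.
-/

open Matrix

section DiffSpan

variable {K V : Type*} [Ring K] [AddCommGroup V] [Module K V]

variable (K) in
def diffSpan (C : Set V) : Submodule K V :=
  Submodule.span K {z | ∃ x ∈ C, ∃ y ∈ C, z = x - y}

theorem sub_mem_diffSpan {C : Set V} {x y : V} (hx : x ∈ C) (hy : y ∈ C) :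
    x - y ∈ diffSpan K C :=
  Submodule.subset_span ⟨x, hx, y, hy, rfl⟩

theorem smul_add_sub_sub_mem_diffSpan {C : Set V} {x y z w : V} (c : K) (hx : x ∈ C)
    (hy : y ∈ C) (hz : z ∈ C) (hw : w ∈ C) : c • (x + y - z - w) ∈ diffSpan K C := by
  rw [show x + y - z - w = (x - z) + (y - w) by abel]
  exact Submodule.smul_mem _ c (add_mem (sub_mem_diffSpan hx hz) (sub_mem_diffSpan hy hw))

end DiffSpan

section Roots

variable {n : ℕ}

def IsRoot (v : Fin n → ℚ) : Prop := (∀ i, ∃ k : ℤ, v i = k) ∧ v ⬝ᵥ v = 2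

theorem isRoot_intCast {k : Fin n → ℤ} : IsRoot (fun i => (k i : ℚ)) ↔ k ⬝ᵥ k = 2 := by
  have hcast : (fun i => (k i : ℚ)) ⬝ᵥ (fun i => (k i : ℚ)) = ((k ⬝ᵥ k : ℤ) : ℚ) := by
    simp [dotProduct]
  rw [IsRoot, hcast]
  exact ⟨fun h => by exact_mod_cast h.2, fun h => ⟨fun i => ⟨k i, rfl⟩, by exact_mod_cast h⟩⟩

theorem IsRoot.exists_intCast {v : Fin n → ℚ} (hv : IsRoot v) :
    ∃ k : Fin n → ℤ, v = (fun i => (k i : ℚ)) ∧ k ⬝ᵥ k = 2 := by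
  choose k hk using hv.1
  obtain rfl : v = fun i => (k i : ℚ) := funext hk
  exact ⟨k, rfl, isRoot_intCast.mp hv⟩

end Roots

theorem Int.eq_zero_or_one_and_sq_add_sq_eq_one {a b c d : ℤ} (hab : a + b = 1)
    (h : a ^ 2 + b ^ 2 + c ^ 2 + d ^ 2 = 2) : (a = 0 ∨ a = 1) ∧ c ^ 2 + d ^ 2 = 1 := by
  have hle : a * (a - 1) ≤ 0 := by nlinarith [sq_nonneg c, sq_nonneg d]
  have hge : 0 ≤ a * (a - 1) := by
    rcases le_or_gt a 0 with ha | ha <;> nlinarith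
  have ha : a = 0 ∨ a = 1 := by
    rcases mul_eq_zero.mp (le_antisymm hle hge) with ha0 | ha1 <;> omega
  refine ⟨ha, ?_⟩
  rcases ha with rfl | rfl <;> nlinarith

theorem Int.eq_neg_of_sq_add_sq_eq_one {c d c' d' : ℤ} (h : c ^ 2 + d ^ 2 = 1)
    (h' : c' ^ 2 + d' ^ 2 = 1) (hne : ¬(c = c' ∧ d = d'))
    (hdist : (c - c') ^ 2 + (d - d') ^ 2 ≠ 2) : c' = -c ∧ d' = -d := by
  have lagrange : (c * c' + d * d') ^ 2 + (c * d' - d * c') ^ 2 = 1 := by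
    linear_combination (c' ^ 2 + d' ^ 2) * h + h'
  have hp0 : c * c' + d * d' ≠ 0 := fun h0 => hdist (by linear_combination h + h' - 2 * h0)
  have hp : c * c' + d * d' = 1 ∨ c * c' + d * d' = -1 := by
    have : -1 ≤ c * c' + d * d' ∧ c * c' + d * d' ≤ 1 := by
      constructor <;> nlinarith [sq_nonneg (c * d' - d * c')]
    omega
  rcases hp with hp | hp
  · have hsq : (c - c') ^ 2 + (d - d') ^ 2 = 0 := by linear_combination h + h' - 2 * hp
    exact absurd ⟨by nlinarith [sq_nonneg (c - c'), sq_nonneg (d - d')],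
      by nlinarith [sq_nonneg (c - c'), sq_nonneg (d - d')]⟩ hne
  · have hsq : (c + c') ^ 2 + (d + d') ^ 2 = 0 := by linear_combination h + h' + 2 * hp
    constructor <;> nlinarith [sq_nonneg (c + c'), sq_nonneg (d + d')]

theorem dotProduct_one_one_zero_zero (x : Fin 4 → ℚ) : x ⬝ᵥ ![1, 1, 0, 0] = x 0 + x 1 := by
  simp [dotProduct, Fin.sum_univ_four]

theorem IsRoot.apply_zero_eq_zero_or_one {x : Fin 4 → ℚ} (hx : IsRoot x)
    (hxh : x ⬝ᵥ ![1, 1, 0, 0] = 1) : x 0 = 0 ∨ x 0 = 1 := by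
  obtain ⟨k, rfl, hk⟩ := hx.exists_intCast
  rw [dotProduct_one_one_zero_zero] at hxh
  simp only [dotProduct, Fin.sum_univ_four, ← sq] at hk
  simpa using (Int.eq_zero_or_one_and_sq_add_sq_eq_one (by exact_mod_cast hxh) hk).1

theorem add_eq_of_not_isRoot_sub {x y : Fin 4 → ℚ} (hx : IsRoot x) (hy : IsRoot y)
    (hxh : x ⬝ᵥ ![1, 1, 0, 0] = 1) (hyh : y ⬝ᵥ ![1, 1, 0, 0] = 1) (h0 : x 0 = y 0)
    (hne : x ≠ y) (hxy : ¬IsRoot (x - y)) : x + y = ![2 * x 0, 2 * (1 - x 0), 0, 0] := by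
  obtain ⟨k, rfl, hk⟩ := hx.exists_intCast
  obtain ⟨k', rfl, hk'⟩ := hy.exists_intCast
  rw [show ((fun i => (k i : ℚ)) - fun i => (k' i : ℚ)) = fun i => ((k - k') i : ℚ) by
    ext i; simp, isRoot_intCast] at hxy
  rw [dotProduct_one_one_zero_zero] at hxh hyh
  simp only [dotProduct, Fin.sum_univ_four, Pi.sub_apply, ← sq] at hk hk' hxy
  have hkh : k 0 + k 1 = 1 := by exact_mod_cast hxh
  have hkh' : k' 0 + k' 1 = 1 := by exact_mod_cast hyh
  have h0' : k 0 = k' 0 := by simpa using h0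
  have h1' : k 1 = k' 1 := by omega
  have hd : (k 2 - k' 2) ^ 2 + (k 3 - k' 3) ^ 2 ≠ 2 := by simpa [h0', h1'] using hxy
  have hne' : ¬(k 2 = k' 2 ∧ k 3 = k' 3) := by
    rintro ⟨h2, h3⟩
    refine hne (funext fun i => ?_)
    fin_cases i <;> simp [h0', h1', h2, h3]
  obtain ⟨h2, h3⟩ := Int.eq_neg_of_sq_add_sq_eq_one
    (Int.eq_zero_or_one_and_sq_add_sq_eq_one hkh hk).2
    (Int.eq_zero_or_one_and_sq_add_sq_eq_one hkh' hk').2 hne' hd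
  have hk1 : (k 1 : ℚ) = 1 - k 0 := by linarith
  ext i; fin_cases i <;> simp [← h0', ← h1', h2, h3, hk1] <;> ring

theorem isRoot_one_neg_one_zero_zero : IsRoot ![(1 : ℚ), -1, 0, 0] := by
  have hcast : ![(1 : ℚ), -1, 0, 0] = fun i => ((![1, -1, 0, 0] : Fin 4 → ℤ) i : ℚ) := by
    ext i; fin_cases i <;> simp
  rw [hcast, isRoot_intCast]
  decide

section RootFree

variable {C : Finset (Fin 4 → ℚ)} (hC : ∀ l ∈ C, IsRoot l ∧ l ⬝ᵥ ![1, 1, 0, 0] = 1)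
  (hfree : ∀ z ∈ diffSpan ℚ (C : Set (Fin 4 → ℚ)), ¬IsRoot z)
include hC hfree

theorem add_eq_of_mem_of_apply_zero_eq {x y : Fin 4 → ℚ} (hx : x ∈ C) (hy : y ∈ C)
    (h0 : x 0 = y 0) (hne : x ≠ y) : x + y = ![2 * x 0, 2 * (1 - x 0), 0, 0] :=
  add_eq_of_not_isRoot_sub (hC x hx).1 (hC y hy).1 (hC x hx).2 (hC y hy).2 h0 hne
    (hfree _ (sub_mem_diffSpan hx hy))

theorem card_le_two_of_apply_zero_eq {D : Finset (Fin 4 → ℚ)} (hD : D ⊆ C)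
    (h0 : ∀ x ∈ D, ∀ y ∈ D, x 0 = y 0) : D.card ≤ 2 := by
  by_contra! h
  obtain ⟨x, hx, y, hy, z, hz, hxy, hxz, hyz⟩ := Finset.two_lt_card.mp h
  have hxy' := add_eq_of_mem_of_apply_zero_eq hC hfree (hD hx) (hD hy) (h0 x hx y hy) hxy
  have hxz' := add_eq_of_mem_of_apply_zero_eq hC hfree (hD hx) (hD hz) (h0 x hx z hz) hxz
  exact hyz (add_left_cancel (hxy'.trans hxz'.symm))

theorem false_of_two_pairs {x x' y y' : Fin 4 → ℚ} (hx : x ∈ C) (hx' : x' ∈ C) (hy : y ∈ C)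
    (hy' : y' ∈ C) (hx0 : x 0 = 1) (hx'0 : x' 0 = 1) (hy0 : y 0 = 0) (hy'0 : y' 0 = 0)
    (hxx' : x ≠ x') (hyy' : y ≠ y') : False := by
  have hsumx := add_eq_of_mem_of_apply_zero_eq hC hfree hx hx' (hx0.trans hx'0.symm) hxx'
  have hsumy := add_eq_of_mem_of_apply_zero_eq hC hfree hy hy' (hy0.trans hy'0.symm) hyy'
  have hhalf : ((1 : ℚ) / 2) • (x + x' - y - y') = ![1, -1, 0, 0] := by
    rw [show x + x' - y - y' = (x + x') - (y + y') by abel, hsumx, hsumy, hx0, hy0]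
    ext i; fin_cases i <;> norm_num
  exact hfree _ (smul_add_sub_sub_mem_diffSpan _ hx hx' hy hy')
    (hhalf ▸ isRoot_one_neg_one_zero_zero)

theorem card_le_three : C.card ≤ 3 := by
  classical
  set D₁ := C.filter (· 0 = 1)
  set D₀ := C.filter (¬· 0 = 1)
  have hD₁ : ∀ x ∈ D₁, x ∈ C ∧ x 0 = 1 := fun x hx => Finset.mem_filter.mp hx
  have hD₀ : ∀ y ∈ D₀, y ∈ C ∧ y 0 = 0 := fun y hy => by
    obtain ⟨hy, hy1⟩ := Finset.mem_filter.mp hy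
    exact ⟨hy, ((hC y hy).1.apply_zero_eq_zero_or_one (hC y hy).2).resolve_right hy1⟩
  have h₁ : D₁.card ≤ 2 := card_le_two_of_apply_zero_eq hC hfree (Finset.filter_subset _ _)
    fun x hx y hy => (hD₁ x hx).2.trans (hD₁ y hy).2.symm
  have h₀ : D₀.card ≤ 2 := card_le_two_of_apply_zero_eq hC hfree (Finset.filter_subset _ _)
    fun x hx y hy => (hD₀ x hx).2.trans (hD₀ y hy).2.symm
  have hcard : D₁.card + D₀.card = C.card := Finset.card_filter_add_card_filter_not _
  by_contra! h
  obtain ⟨x, x', hxx', hD₁eq⟩ := Finset.card_eq_two.mp (show D₁.card = 2 by omega)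
  obtain ⟨y, y', hyy', hD₀eq⟩ := Finset.card_eq_two.mp (show D₀.card = 2 by omega)
  obtain ⟨hx, hx0⟩ := hD₁ x (by simp [hD₁eq])
  obtain ⟨hx', hx'0⟩ := hD₁ x' (by simp [hD₁eq])
  obtain ⟨hy, hy0⟩ := hD₀ y (by simp [hD₀eq])
  obtain ⟨hy', hy'0⟩ := hD₀ y' (by simp [hD₀eq])
  exact false_of_two_pairs hC hfree hx hx' hy hy' hx0 hx'0 hy0 hy'0 hxx' hyy'

end RootFree

/-- improvement in Claim D.2.2: in `ℤ⁴` with `h = e₁ + e₂`, for the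
4-element set `C = {e₁ + e₃, e₁ − e₃, e₂ + e₄, e₂ − e₄}` of roots `l` with
`l·h = 1`, the combination `(1/2)(l₁ + l₂ − l₃ − l₄) = e₁ − e₂` is a square-2
integer vector in the span of differences of elements of `C`; hence any set of
roots `l` with `l² = 2`, `l·h = 1` whose difference span contains no square-2
integer vector has at most 3 elements. -/
theorem stmt19 :
    (((1 : ℚ) / 2) • ((![1,0,1,0] : Fin 4 → ℚ) + ![1,0,-1,0] - ![0,1,0,1] - ![0,1,0,-1])
        = ![1,-1,0,0] ∧
      (∑ i, (![1,-1,0,0] : Fin 4 → ℚ) i * (![1,-1,0,0] : Fin 4 → ℚ) i) = 2 ∧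
      (![1,-1,0,0] : Fin 4 → ℚ) ∈ Submodule.span ℚ
        {z : Fin 4 → ℚ | ∃ x ∈ ({![1,0,1,0], ![1,0,-1,0], ![0,1,0,1], ![0,1,0,-1]} :
            Set (Fin 4 → ℚ)),
          ∃ y ∈ ({![1,0,1,0], ![1,0,-1,0], ![0,1,0,1], ![0,1,0,-1]} : Set (Fin 4 → ℚ)),
          z = x - y}) ∧
    (∀ C : Finset (Fin 4 → ℚ),
      (∀ l ∈ C, (∀ i, ∃ k : ℤ, l i = k) ∧ (∑ i, l i * l i) = 2 ∧
        (∑ i, l i * (![1,1,0,0] : Fin 4 → ℚ) i) = 1) →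
      (∀ z ∈ Submodule.span ℚ {z : Fin 4 → ℚ | ∃ x ∈ C, ∃ y ∈ C, z = x - y},
        (∀ i, ∃ k : ℤ, z i = k) → (∑ i, z i * z i) ≠ 2) →
      C.card ≤ 3) := by
  have hhalf : ((1 : ℚ) / 2) • ((![1,0,1,0] : Fin 4 → ℚ) + ![1,0,-1,0] - ![0,1,0,1]
      - ![0,1,0,-1]) = ![1,-1,0,0] := by
    ext i; fin_cases i <;> norm_num
  refine ⟨⟨hhalf, isRoot_one_neg_one_zero_zero.2, ?_⟩, ?_⟩
  · exact hhalf ▸ smul_add_sub_sub_mem_diffSpan (K := ℚ) _ (by simp) (by simp) (by simp) (by simp)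
  · intro C hC hfree
    exact card_le_three (fun l hl => ⟨⟨(hC l hl).1, (hC l hl).2.1⟩, (hC l hl).2.2⟩)
      fun z hz hroot => hfree z hz hroot.1 hroot.2
end
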